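/- For every natural number m and every sign ε ∈ {1,−1}, the smooth function φ = φ^ε_m : ℝ⁴ → ℂ satisfies, at every point (x,y,z,w) ∈ ℝ⁴, the identity 2πi·(xw − yz)·φ(x,y,z,w) − (1/(2πi))·( (∂²φ/∂z∂y)(x,y,z,w) − (∂²φ/∂w∂x)(x,y,z,w) ) = −i·m·ε·φ(x,y,z,w). (This expresses that φ^ε_m is an eigenvector, with eigenvalue −imε, of the infinitesimal action in the Weil representation of the compact generator (0 1; −1 0) of 𝔰𝔩₂(ℝ), whose action is 2πi(xw−yz) minus (1/2πi)(∂²/∂z∂y − ∂²/∂w∂x).) -/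

import Mathlib

open Complex Real

/-- The Schwartz function `φ^ε_m(x,y,z,w) = (x + εiy + iz − εw)^m · exp(−π(x²+y²+z²+w²))`,
written as a curried function of four real variables. -/
noncomputable def phiEps (m : ℕ) (ε : ℝ) (x y z w : ℝ) : ℂ :=
  ((x : ℂ) + (ε : ℂ) * Complex.I * (y : ℂ) + Complex.I * (z : ℂ) - (ε : ℂ) * (w : ℂ)) ^ m *
    Complex.exp (-(π : ℂ) * ((x ^ 2 + y ^ 2 + z ^ 2 + w ^ 2 : ℝ) : ℂ))

/-!
Write `φ_k = L^k G` with `L = x + εiy + iz − εw` linear and `G` the Gaussian. Each partial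
derivative stays in the family: `∂_u φ_k = k (∂_u L) φ_{k-1} − 2πu φ_k`. In
`∂_z∂_y φ_m − ∂_w∂_x φ_m` the `φ_{m-2}` terms cancel because `∂_yL ∂_zL = ∂_xL ∂_wL = −ε`; the
`φ_{m-1}` terms carry `(z∂_y + y∂_z − w∂_x − x∂_w) L`, which is `εL` when `ε² = 1`, giving
`−2πmε φ_m`; and the Gaussian contributes `4π²(yz − xw) φ_m`, which the multiplication term
`2πi(xw − yz)` of the operator cancels after division by `2πi`.
-/

lemma HasDerivAt.pow_mul_gaussian {L : ℝ → ℂ} {l : ℂ} {t : ℝ} (hL : HasDerivAt L l t)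
    (k : ℕ) (r : ℝ) :
    HasDerivAt (fun s => L s ^ k * cexp (-π * ((s ^ 2 + r : ℝ) : ℂ)))
      ((k * l * L t ^ (k - 1) - 2 * π * t * L t ^ k) * cexp (-π * ((t ^ 2 + r : ℝ) : ℂ))) t := by
  have hQ : HasDerivAt (fun s : ℝ => -(π : ℂ) * ((s ^ 2 + r : ℝ) : ℂ)) (-π * (2 * t)) t := by
    simpa using (((hasDerivAt_pow 2 t).add_const r).ofReal_comp).const_mul (-(π : ℂ))
  exact ((hL.fun_pow k).mul hQ.cexp).congr_deriv (by ring)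

section
variable (k : ℕ) (ε x y z w : ℝ)

lemma hasDerivAt_phiEps_x :
    HasDerivAt (fun x' => phiEps k ε x' y z w)
      (k * phiEps (k - 1) ε x y z w - 2 * π * x * phiEps k ε x y z w) x := by
  have hL : HasDerivAt (fun s : ℝ => (s : ℂ) + ε * I * y + I * z - ε * w) 1 x := by
    simpa using (((hasDerivAt_id x).ofReal_comp.add_const (ε * I * y : ℂ)).add_const
      (I * z : ℂ)).sub_const (ε * w : ℂ)
  convert hL.pow_mul_gaussian k (y ^ 2 + z ^ 2 + w ^ 2) using 1
  · funext s; simp only [phiEps]; ring_nf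
  · simp only [phiEps]; ring_nf

lemma hasDerivAt_phiEps_y :
    HasDerivAt (fun y' => phiEps k ε x y' z w)
      (k * (ε * I) * phiEps (k - 1) ε x y z w - 2 * π * y * phiEps k ε x y z w) y := by
  have hL : HasDerivAt (fun s : ℝ => (x : ℂ) + ε * I * s + I * z - ε * w) (ε * I) y := by
    simpa using ((((hasDerivAt_id y).ofReal_comp.const_mul (ε * I : ℂ)).const_add
      (x : ℂ)).add_const (I * z : ℂ)).sub_const (ε * w : ℂ)
  convert hL.pow_mul_gaussian k (x ^ 2 + z ^ 2 + w ^ 2) using 1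
  · funext s; simp only [phiEps]; ring_nf
  · simp only [phiEps]; ring_nf

lemma hasDerivAt_phiEps_z :
    HasDerivAt (fun z' => phiEps k ε x y z' w)
      (k * I * phiEps (k - 1) ε x y z w - 2 * π * z * phiEps k ε x y z w) z := by
  have hL : HasDerivAt (fun s : ℝ => (x : ℂ) + ε * I * y + I * s - ε * w) I z := by
    simpa using (((hasDerivAt_id z).ofReal_comp.const_mul I).const_add
      ((x : ℂ) + ε * I * y)).sub_const (ε * w : ℂ)
  convert hL.pow_mul_gaussian k (x ^ 2 + y ^ 2 + w ^ 2) using 1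
  · funext s; simp only [phiEps]; ring_nf
  · simp only [phiEps]; ring_nf

lemma hasDerivAt_phiEps_w :
    HasDerivAt (fun w' => phiEps k ε x y z w')
      (k * (-ε) * phiEps (k - 1) ε x y z w - 2 * π * w * phiEps k ε x y z w) w := by
  have hL : HasDerivAt (fun s : ℝ => (x : ℂ) + ε * I * y + I * z - ε * s) (-ε) w := by
    simpa using ((hasDerivAt_id w).ofReal_comp.const_mul (ε : ℂ)).const_sub
      ((x : ℂ) + ε * I * y + I * z)
  convert hL.pow_mul_gaussian k (x ^ 2 + y ^ 2 + z ^ 2) using 1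
  · funext s; simp only [phiEps]; ring_nf
  · simp only [phiEps]; ring_nf

lemma deriv_deriv_phiEps_zy :
    deriv (fun z' => deriv (fun y' => phiEps k ε x y' z' w) y) z =
      k * (ε * I) * ((k - 1 : ℕ) * I * phiEps (k - 1 - 1) ε x y z w
          - 2 * π * z * phiEps (k - 1) ε x y z w)
        - 2 * π * y * (k * I * phiEps (k - 1) ε x y z w - 2 * π * z * phiEps k ε x y z w) := by
  have h : (fun z' => deriv (fun y' => phiEps k ε x y' z' w) y) = fun z' =>
      k * (ε * I) * phiEps (k - 1) ε x y z' w - 2 * π * y * phiEps k ε x y z' w :=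
    funext fun z' => (hasDerivAt_phiEps_y k ε x y z' w).deriv
  rw [h]
  exact (((hasDerivAt_phiEps_z (k - 1) ε x y z w).const_mul _).sub
    ((hasDerivAt_phiEps_z k ε x y z w).const_mul _)).deriv

lemma deriv_deriv_phiEps_wx :
    deriv (fun w' => deriv (fun x' => phiEps k ε x' y z w') x) w =
      k * ((k - 1 : ℕ) * (-ε) * phiEps (k - 1 - 1) ε x y z w
          - 2 * π * w * phiEps (k - 1) ε x y z w)
        - 2 * π * x * (k * (-ε) * phiEps (k - 1) ε x y z w - 2 * π * w * phiEps k ε x y z w) := by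
  have h : (fun w' => deriv (fun x' => phiEps k ε x' y z w') x) = fun w' =>
      k * phiEps (k - 1) ε x y z w' - 2 * π * x * phiEps k ε x y z w' :=
    funext fun w' => (hasDerivAt_phiEps_x k ε x y z w').deriv
  rw [h]
  exact (((hasDerivAt_phiEps_w (k - 1) ε x y z w).const_mul _).sub
    ((hasDerivAt_phiEps_w k ε x y z w).const_mul _)).deriv

lemma natCast_mul_phiEps_pred :
    (k : ℂ) * ((x : ℂ) + ε * I * y + I * z - ε * w) * phiEps (k - 1) ε x y z w =
      k * phiEps k ε x y z w := by
  rcases k with _ | k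
  · simp
  · simp only [phiEps, Nat.add_sub_cancel]
    ring

lemma deriv_deriv_phiEps_zy_sub_wx (hε : ε ^ 2 = 1) :
    deriv (fun z' => deriv (fun y' => phiEps k ε x y' z' w) y) z -
        deriv (fun w' => deriv (fun x' => phiEps k ε x' y z w') x) w =
      (-2 * π * k * ε + 4 * π ^ 2 * (y * z - x * w)) * phiEps k ε x y z w := by
  have hε' : (ε : ℂ) ^ 2 = 1 := by exact_mod_cast hε
  rw [deriv_deriv_phiEps_zy, deriv_deriv_phiEps_wx]
  linear_combination (-2 * π * ε : ℂ) * natCast_mul_phiEps_pred k ε x y z w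
    + (2 * π * k * (I * y - w) * phiEps (k - 1) ε x y z w) * hε'
    + (k * (k - 1 : ℕ) * ε * phiEps (k - 1 - 1) ε x y z w) * I_sq
end

/-- `φ^ε_m` is an eigenvector, with eigenvalue `−imε`, of the infinitesimal Weil-representation
action `2πi(xw−yz) − (1/(2πi))(∂²/∂z∂y − ∂²/∂w∂x)` of the compact generator `(0 1; −1 0)`
of `𝔰𝔩₂(ℝ)`. -/
theorem phiEps_weil_eigenvector (m : ℕ) (ε : ℝ) (hε : ε = 1 ∨ ε = -1) (x y z w : ℝ) :
    2 * (π : ℂ) * Complex.I * ((x * w - y * z : ℝ) : ℂ) * phiEps m ε x y z w -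
      (1 / (2 * (π : ℂ) * Complex.I)) *
        (deriv (fun z' : ℝ => deriv (fun y' : ℝ => phiEps m ε x y' z' w) y) z -
         deriv (fun w' : ℝ => deriv (fun x' : ℝ => phiEps m ε x' y z w') x) w) =
      -Complex.I * (m : ℂ) * (ε : ℂ) * phiEps m ε x y z w := by
  have hε2 : ε ^ 2 = 1 := by rcases hε with rfl | rfl <;> norm_num
  rw [deriv_deriv_phiEps_zy_sub_wx m ε x y z w hε2]
  field_simp
  push_cast
  linear_combination (4 * π * (x * w - y * z) + 2 * m * ε) * phiEps m ε x y z w * I_sq
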